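/- arXiv:1906.07019 — 5 statements merged into one kernel-verified Lean document; each statement's English description precedes it below -/
import Mathlib

section
/- Let X be a real Banach space and g : [0,1] → X strongly measurable. Then F_g : [0,1] → ℓ∞(B_{X*}), F_g(t)(x*) = max (x*(g(t))) 0, is Bochner integrable with respect to Lebesgue measure on [0,1] if and only if g is Bochner integrable. (This is Proposition: the multifunction G(t) = conv{0,g(t)} determined by a strongly measurable g is Bochner integrable iff g is, read through the isometric Rådström embedding of ck(X) into ℓ∞(B_{X*}).) -/
open MeasureTheory
open scoped ENNReal

/-- The image of the determined multifunction `G(t) = conv{0, g(t)}` under the Rådström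
support-function embedding: `Fg g t ∈ ℓ∞(B_{X*})` is given by `x* ↦ max (x* (g t)) 0`. -/
noncomputable def Fg {X : Type*} [NormedAddCommGroup X] [NormedSpace ℝ X]
    (g : ℝ → X) (t : ℝ) : lp (fun _ : Metric.closedBall (0 : X →L[ℝ] ℝ) 1 => ℝ) ∞ :=
  ⟨fun p => max ((p : X →L[ℝ] ℝ) (g t)) 0, by
    apply memℓp_infty
    refine ⟨‖g t‖, ?_⟩
    rintro r ⟨p, rfl⟩
    have hp : ‖(p : X →L[ℝ] ℝ)‖ ≤ 1 := mem_closedBall_zero_iff.mp p.2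
    have h1 : |(p : X →L[ℝ] ℝ) (g t)| ≤ ‖g t‖ := by
      calc |(p : X →L[ℝ] ℝ) (g t)| = ‖(p : X →L[ℝ] ℝ) (g t)‖ := rfl
        _ ≤ ‖(p : X →L[ℝ] ℝ)‖ * ‖g t‖ := (p : X →L[ℝ] ℝ).le_opNorm _
        _ ≤ 1 * ‖g t‖ := by gcongr
        _ = ‖g t‖ := one_mul _
    simp only [Real.norm_eq_abs]
    rcases le_total ((p : X →L[ℝ] ℝ) (g t)) 0 with h | h
    · rw [max_eq_right h]; simp [norm_nonneg]
    · rw [max_eq_left h, abs_of_nonneg h]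
      exact (le_abs_self _).trans h1⟩

/-!
`x ↦ F_x` (with `F_x p = max (p x) 0` on the dual unit ball) is `1`-Lipschitz, hence `F_g` is
strongly measurable whenever `g` is, and it is norm-preserving: `‖F_x‖ ≤ ‖x‖` is the Lipschitz
bound against `F_0 = 0`, and a Hahn–Banach norming functional `p` with `p x = ‖x‖` gives equality.
Since integrability of a strongly measurable function only depends on its norm, `F_g` and `g`
are integrable together, for any measure.
-/

section
variable {X : Type*} [NormedAddCommGroup X] [NormedSpace ℝ X]

lemma abs_apply_le_of_mem_closedBall_one {p : X →L[ℝ] ℝ} (hp : p ∈ Metric.closedBall 0 1)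
    (x : X) : |p x| ≤ ‖x‖ :=
  calc |p x| ≤ ‖p‖ * ‖x‖ := p.le_opNorm x
    _ ≤ ‖x‖ := mul_le_of_le_one_left (norm_nonneg x) (mem_closedBall_zero_iff.mp hp)

lemma Fg_apply (g : ℝ → X) (t : ℝ) (p : Metric.closedBall (0 : X →L[ℝ] ℝ) 1) :
    Fg g t p = max ((p : X →L[ℝ] ℝ) (g t)) 0 :=
  rfl

lemma Fg_eq_comp (g : ℝ → X) : Fg g = (fun x : X => Fg (fun _ => x) 0) ∘ g :=
  rfl

lemma Fg_const_zero : Fg (fun _ : ℝ => (0 : X)) 0 = 0 := by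
  ext p
  simp [Fg_apply]

lemma lipschitzWith_one_Fg_const : LipschitzWith 1 (fun x : X => Fg (fun _ : ℝ => x) 0) := by
  refine LipschitzWith.of_dist_le_mul fun x y => ?_
  rw [NNReal.coe_one, one_mul, dist_eq_norm, dist_eq_norm]
  refine lp.norm_le_of_forall_le (norm_nonneg _) fun p => ?_
  calc |max ((p : X →L[ℝ] ℝ) x) 0 - max ((p : X →L[ℝ] ℝ) y) 0|
      ≤ |(p : X →L[ℝ] ℝ) x - (p : X →L[ℝ] ℝ) y| := abs_max_sub_max_le_abs _ _ _
    _ = |(p : X →L[ℝ] ℝ) (x - y)| := by rw [map_sub]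
    _ ≤ ‖x - y‖ := abs_apply_le_of_mem_closedBall_one p.2 _

lemma norm_Fg (g : ℝ → X) (t : ℝ) : ‖Fg g t‖ = ‖g t‖ := by
  refine le_antisymm ?_ ?_
  · have h := lipschitzWith_one_Fg_const.dist_le_mul (g t) (0 : X)
    rwa [Fg_const_zero, dist_zero_right, dist_zero_right, NNReal.coe_one, one_mul] at h
  · obtain ⟨p, hp, hpx⟩ := exists_dual_vector'' ℝ (g t)
    have hp_mem : p ∈ Metric.closedBall (0 : X →L[ℝ] ℝ) 1 := mem_closedBall_zero_iff.mpr hp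
    calc ‖g t‖ = Fg g t ⟨p, hp_mem⟩ := by simp [Fg_apply, hpx]
      _ ≤ ‖Fg g t ⟨p, hp_mem⟩‖ := le_abs_self _
      _ ≤ ‖Fg g t‖ := lp.norm_apply_le_norm ENNReal.top_ne_zero _ _

variable {μ : Measure ℝ} {g : ℝ → X}

lemma aestronglyMeasurable_Fg (hg : AEStronglyMeasurable g μ) : AEStronglyMeasurable (Fg g) μ :=
  Fg_eq_comp g ▸ lipschitzWith_one_Fg_const.continuous.comp_aestronglyMeasurable hg

lemma integrable_Fg_iff_of_aestronglyMeasurable (hg : AEStronglyMeasurable g μ) :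
    Integrable (Fg g) μ ↔ Integrable g μ := by
  simpa only [memLp_one_iff_integrable] using
    memLp_congr_norm (p := 1) (aestronglyMeasurable_Fg hg) hg (.of_forall (norm_Fg g))

end

theorem integrable_Fg_iff_general {X : Type*} [NormedAddCommGroup X] [NormedSpace ℝ X]
    (g : ℝ → X)
    (hg : AEStronglyMeasurable g (volume.restrict (Set.Icc (0 : ℝ) 1))) :
    Integrable (Fg g) (volume.restrict (Set.Icc (0 : ℝ) 1)) ↔
      Integrable g (volume.restrict (Set.Icc (0 : ℝ) 1)) :=
  integrable_Fg_iff_of_aestronglyMeasurable hg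

/-- The determined multifunction `G(t) = conv{0, g(t)}` (read through the isometric Rådström
embedding as `F_g : [0,1] → ℓ∞(B_{X*})`) is Bochner integrable w.r.t. Lebesgue measure on
`[0,1]` if and only if `g` is Bochner integrable. -/
theorem integrable_Fg_iff {X : Type*} [NormedAddCommGroup X] [NormedSpace ℝ X]
    [CompleteSpace X] (g : ℝ → X)
    (hg : AEStronglyMeasurable g (volume.restrict (Set.Icc (0 : ℝ) 1))) :
    Integrable (Fg g) (volume.restrict (Set.Icc (0 : ℝ) 1)) ↔
      Integrable g (volume.restrict (Set.Icc (0 : ℝ) 1)) :=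
  integrable_Fg_iff_general g hg
end

section
/- Let X be a real Banach space, let g : [0,1] → X be McShane integrable on [0,1], and let α : [0,1] → ℝ be bounded and (Lebesgue) measurable. Then the function t ↦ α(t) • g(t) is McShane integrable on [0,1]. -/
open MeasureTheory BoxIntegral

/-- The unit interval `[0,1]` as a one-dimensional box. -/
noncomputable def unitBox : BoxIntegral.Box (Fin 1) :=
  ⟨fun _ => (0 : ℝ), fun _ => (1 : ℝ), fun _ => one_pos⟩

/-!
By the Saks–Henstock lemma, together with retagging (a McShane tag need not lie in its box,
so by compactness every box can be retagged at a point where `‖g‖` is below a fixed bound),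
the indefinite integral `J ↦ ∫_J g` is bounded and absolutely continuous on prepartitions.
Combined with the regularity of the measure, this makes `𝟙_E • g` integrable for every
measurable `E`, hence `σ • g` for every measurable `σ` with finitely many values. Finally, all
partial sums of a fine Riemann sum of `g` are uniformly bounded, so by Hahn–Banach a sum
`∑ c_J |J| g(t_J)` with `|c_J| ≤ δ` is `O(δ)`; approximating `α` uniformly by the step function
`δ ⌊α / δ⌋` then yields the Cauchy criterion for `α • g`.
-/

open Metric Set Topology
open scoped NNReal ENNReal

theorem Finset.sum_abs_le_two_mul_of_forall_subset {α : Type*} {s : Finset α} {a : α → ℝ}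
    {A : ℝ} (h : ∀ t ⊆ s, |∑ i ∈ t, a i| ≤ A) : ∑ i ∈ s, |a i| ≤ 2 * A := by
  classical
  rw [← Finset.sum_filter_add_sum_filter_not s (fun i => 0 ≤ a i), two_mul]
  have hpos : ∑ i ∈ s with 0 ≤ a i, |a i| = ∑ i ∈ s with 0 ≤ a i, a i :=
    Finset.sum_congr rfl fun i hi => abs_of_nonneg (Finset.mem_filter.1 hi).2
  have hneg : ∑ i ∈ s with ¬0 ≤ a i, |a i| = -∑ i ∈ s with ¬0 ≤ a i, a i := by
    rw [← Finset.sum_neg_distrib]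
    exact Finset.sum_congr rfl fun i hi => abs_of_neg (not_le.1 (Finset.mem_filter.1 hi).2)
  rw [hpos, hneg]
  exact add_le_add ((le_abs_self _).trans (h _ (filter_subset _ _)))
    ((neg_le_abs _).trans (h _ (filter_subset _ _)))

theorem norm_sum_smul_le_of_forall_subset {E α : Type*} [NormedAddCommGroup E] [NormedSpace ℝ E]
    {s : Finset α} {c : α → ℝ} {x : α → E} {B A : ℝ} (hB₀ : 0 ≤ B)
    (hB : ∀ i ∈ s, |c i| ≤ B) (hA : ∀ t ⊆ s, ‖∑ i ∈ t, x i‖ ≤ A) :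
    ‖∑ i ∈ s, c i • x i‖ ≤ 2 * B * A := by
  obtain ⟨φ, hφ, hφv⟩ := exists_dual_vector'' ℝ (∑ i ∈ s, c i • x i)
  have hφA : ∀ t ⊆ s, |∑ i ∈ t, φ (x i)| ≤ A := fun t ht => by
    rw [← map_sum, ← Real.norm_eq_abs]
    exact (φ.le_of_opNorm_le hφ _).trans (by simpa using hA t ht)
  replace hφv : φ (∑ i ∈ s, c i • x i) = ‖∑ i ∈ s, c i • x i‖ := by exact_mod_cast hφv
  calc ‖∑ i ∈ s, c i • x i‖ = ∑ i ∈ s, c i * φ (x i) := by simp [← hφv]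
    _ ≤ ∑ i ∈ s, B * |φ (x i)| := Finset.sum_le_sum fun i hi => (le_abs_self _).trans <| by
        rw [abs_mul]; exact mul_le_mul_of_nonneg_right (hB i hi) (abs_nonneg _)
    _ ≤ B * (2 * A) := by
        rw [← Finset.mul_sum]
        exact mul_le_mul_of_nonneg_left (Finset.sum_abs_le_two_mul_of_forall_subset hφA) hB₀
    _ = 2 * B * A := by ring

theorem exists_closedBall_subset_of_forall_mem_nhds {X : Type*} [PseudoMetricSpace X]
    {K : Set X} {W : X → Set X} (hW : ∀ x ∈ K, W x ∈ 𝓝 x) :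
    ∃ r : X → Ioi (0 : ℝ), ∀ x ∈ K, closedBall x (r x) ⊆ W x := by
  have : ∀ x ∈ K, ∃ r : Ioi (0 : ℝ), closedBall x r ⊆ W x := fun x hx => by
    obtain ⟨r, hr, hsub⟩ := nhds_basis_closedBall.mem_iff.1 (hW x hx)
    exact ⟨⟨r, hr⟩, hsub⟩
  choose! r hr using this
  exact ⟨r, hr⟩

theorem IsCompact.exists_bound_forall_exists_mem_ball {X : Type*} [PseudoMetricSpace X]
    {K : Set X} (hK : IsCompact K) (g : X → ℝ) (r : X → Ioi (0 : ℝ)) :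
    ∃ N, ∀ x ∈ K, ∃ t ∈ K, g t ≤ N ∧ x ∈ ball t (r t) := by
  obtain ⟨T, hTK, hcover⟩ :=
    hK.elim_nhds_subcover (fun t => ball t (r t)) fun t _ => ball_mem_nhds t (r t).2
  obtain ⟨N, hN⟩ := (T.image g).bddAbove
  refine ⟨N, fun x hx => ?_⟩
  obtain ⟨t, ht, hxt⟩ := mem_iUnion₂.1 (hcover hx)
  exact ⟨t, hTK t ht, hN (by simpa using ⟨t, ht, rfl⟩), hxt⟩

namespace BoxIntegral

open IntegrationParams

theorem Prepartition.boxes_filter_mem {ι : Type*} {I : Box ι} {π : Prepartition I}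
    {t : Finset (Box ι)} (ht : t ⊆ π.boxes) : (π.filter (· ∈ t)).boxes = t := by
  ext J
  exact ⟨fun h => (π.mem_filter.1 h).2, fun h => π.mem_filter.2 ⟨ht h, h⟩⟩

section

variable {ι : Type*} [Fintype ι] {E F : Type*} [NormedAddCommGroup E] [NormedSpace ℝ E]
  [NormedAddCommGroup F] [NormedSpace ℝ F] {I : Box ι} {f : (ι → ℝ) → E}
  [CompleteSpace F] {vol : ι →ᵇᵃ (E →L[ℝ] F)}

theorem TaggedPrepartition.IsSubordinate.memBaseSet_mcShane {π : TaggedPrepartition I}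
    {r : (ι → ℝ) → Ioi (0 : ℝ)} (h : π.IsSubordinate r) (c : ℝ≥0) :
    McShane.MemBaseSet I c r π :=
  ⟨h, fun h' => absurd h' (by decide), fun h' => absurd h' (by decide),
    fun h' => absurd h' (by decide)⟩

theorem TaggedPrepartition.iUnion_filter_inf_compl_subset {s U F : Set (ι → ℝ)}
    {r : (ι → ℝ) → Ioi (0 : ℝ)} {π π' : TaggedPrepartition I}
    (hU : ∀ x ∈ Box.Icc I, x ∈ s → closedBall x (r x) ⊆ U)
    (hF : ∀ x ∈ Box.Icc I, x ∉ s → closedBall x (r x) ⊆ Fᶜ)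
    (hπ : π.IsSubordinate r) (hπ' : π'.IsSubordinate r) (hp' : π'.IsPartition) :
    (π.toPrepartition.filter (π.tag · ∈ s) ⊓
      (π'.toPrepartition.filter (π'.tag · ∈ s)).compl).iUnion ⊆ U \ F := by
  rw [Prepartition.iUnion_inf, Prepartition.iUnion_compl]
  rintro x ⟨hxA, hxI, hxA'⟩
  obtain ⟨J, hJ, hxJ⟩ := (Prepartition.mem_iUnion _).1 hxA
  obtain ⟨hJπ, hJs⟩ := (Prepartition.mem_filter _).1 hJ
  obtain ⟨J', hJ', hxJ'⟩ := hp' x hxI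
  have hJ's : π'.tag J' ∉ s := fun h =>
    hxA' ((Prepartition.mem_iUnion _).2 ⟨J', (Prepartition.mem_filter _).2 ⟨hJ', h⟩, hxJ'⟩)
  exact ⟨hU _ (π.tag_mem_Icc J) hJs (hπ J hJπ (Box.coe_subset_Icc hxJ)),
    hF _ (π'.tag_mem_Icc J') hJ's (hπ' J' hJ' (Box.coe_subset_Icc hxJ'))⟩

theorem integrable_mcShane_of_forall_dist_integralSum_le
    (h : ∀ ε > 0, ∃ r : (ι → ℝ) → Ioi (0 : ℝ), ∀ π₁ π₂ : TaggedPrepartition I,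
      π₁.IsSubordinate r → π₁.IsPartition → π₂.IsSubordinate r → π₂.IsPartition →
      dist (integralSum f vol π₁) (integralSum f vol π₂) ≤ ε) :
    Integrable I McShane f vol := by
  refine integrable_iff_cauchy_basis.2 fun ε hε => ?_
  obtain ⟨r, hr⟩ := h ε hε
  exact ⟨fun _ => r, fun _ => rCond_of_bRiemann_eq_false _ rfl,
    fun _ _ π₁ π₂ h₁ hp₁ h₂ hp₂ => hr π₁ π₂ h₁.1 hp₁ h₂.1 hp₂⟩

theorem integrable_mcShane_of_forall_exists_dist_integralSum_le
    (h : ∀ ε > 0, ∃ g : (ι → ℝ) → E, Integrable I McShane g vol ∧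
      ∃ r : (ι → ℝ) → Ioi (0 : ℝ), ∀ π : TaggedPrepartition I, π.IsSubordinate r →
        dist (integralSum f vol π) (integralSum g vol π) ≤ ε) :
    Integrable I McShane f vol := by
  refine integrable_mcShane_of_forall_dist_integralSum_le fun ε hε => ?_
  obtain ⟨g, hg, r, hr⟩ := h (ε / 4) (by positivity)
  set rg := hg.convergenceR (ε / 4) 0
  refine ⟨fun x => min (r x) (rg x), fun π₁ π₂ h₁ hp₁ h₂ hp₂ => ?_⟩
  have hg₁₂ := hg.dist_integralSum_le_of_memBaseSet (by positivity) (by positivity)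
    ((h₁.mono fun x _ => min_le_right _ (rg x)).memBaseSet_mcShane 0)
    ((h₂.mono fun x _ => min_le_right _ (rg x)).memBaseSet_mcShane 0)
    (hp₁.iUnion_eq.trans hp₂.iUnion_eq.symm)
  have hfg₁ := hr π₁ (h₁.mono fun x _ => min_le_left (r x) _)
  have hfg₂ := hr π₂ (h₂.mono fun x _ => min_le_left (r x) _)
  calc dist (integralSum f vol π₁) (integralSum f vol π₂)
      ≤ dist (integralSum f vol π₁) (integralSum g vol π₁)
        + dist (integralSum g vol π₁) (integralSum g vol π₂)
        + dist (integralSum g vol π₂) (integralSum f vol π₂) := dist_triangle4 _ _ _ _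
    _ ≤ ε / 4 + (ε / 4 + ε / 4) + ε / 4 := by
        rw [dist_comm (integralSum g vol π₂)]; gcongr
    _ = ε := by ring

theorem Integrable.exists_norm_sum_sub_integral_le (hf : Integrable I McShane f vol) {ε : ℝ}
    (hε : 0 < ε) : ∃ r : (ι → ℝ) → Ioi (0 : ℝ), ∀ π : TaggedPrepartition I, π.IsSubordinate r →
      ∀ t ⊆ π.boxes, ‖∑ J ∈ t, (vol J (f (π.tag J)) - integral J McShane f vol)‖ ≤ ε := by
  classical
  refine ⟨hf.convergenceR ε 0, fun π hπ t ht => ?_⟩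
  have := hf.dist_integralSum_sum_integral_le_of_memBaseSet hε
    ((hπ.memBaseSet_mcShane 0).filter (· ∈ t))
  have hboxes : (π.filter (· ∈ t)).boxes = t := Prepartition.boxes_filter_mem ht
  rwa [dist_eq_norm, integralSum, ← Finset.sum_sub_distrib, hboxes] at this

theorem Integrable.sum_integral_eq_add_inf_compl {l : IntegrationParams}
    (hf : Integrable I l f vol) (π₁ π₂ : Prepartition I) :
    ∑ J ∈ π₁.boxes, integral J l f vol = ∑ J ∈ (π₁ ⊓ π₂).boxes, integral J l f vol
      + ∑ J ∈ (π₁ ⊓ π₂.compl).boxes, integral J l f vol := by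
  have hd : Disjoint (π₁ ⊓ π₂).iUnion (π₁ ⊓ π₂.compl).iUnion := by
    rw [Prepartition.iUnion_inf, Prepartition.iUnion_inf, Prepartition.iUnion_compl]
    exact Disjoint.mono inter_subset_right inter_subset_right disjoint_sdiff_self_right
  have hU : π₁.iUnion = ((π₁ ⊓ π₂).disjUnion (π₁ ⊓ π₂.compl) hd).iUnion := by
    rw [Prepartition.iUnion_disjUnion, Prepartition.iUnion_inf, Prepartition.iUnion_inf,
      Prepartition.iUnion_compl, ← inter_union_distrib_left,
      union_sdiff_cancel π₂.iUnion_subset, inter_eq_left.2 π₁.iUnion_subset]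
  rw [hf.sum_integral_congr hU]
  exact Prepartition.sum_disj_union_boxes hd _

theorem Integrable.sum_integral_sub_sum_integral {l : IntegrationParams}
    (hf : Integrable I l f vol) (π₁ π₂ : Prepartition I) :
    ∑ J ∈ π₁.boxes, integral J l f vol - ∑ J ∈ π₂.boxes, integral J l f vol
      = ∑ J ∈ (π₁ ⊓ π₂.compl).boxes, integral J l f vol
        - ∑ J ∈ (π₂ ⊓ π₁.compl).boxes, integral J l f vol := by
  rw [hf.sum_integral_eq_add_inf_compl π₁ π₂, hf.sum_integral_eq_add_inf_compl π₂ π₁,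
    inf_comm π₂ π₁]
  abel

end

section

variable {ι : Type*} [Fintype ι] {E : Type*} [NormedAddCommGroup E] [NormedSpace ℝ E]
  [CompleteSpace E] {I : Box ι} {f : (ι → ℝ) → E} {μ : Measure (ι → ℝ)}
  [IsLocallyFiniteMeasure μ]

theorem Integrable.exists_norm_sum_integral_le_add_mul
    (hf : Integrable I McShane f μ.toBoxAdditive.toSMul) {ε : ℝ} (hε : 0 < ε) :
    ∃ N, ∀ π₀ : Prepartition I, ‖∑ J ∈ π₀.boxes, integral J McShane f μ.toBoxAdditive.toSMul‖
      ≤ ε + N * μ.real π₀.iUnion := by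
  obtain ⟨r, hr⟩ := hf.exists_norm_sum_sub_integral_le hε
  obtain ⟨N, hN⟩ := I.isCompact_Icc.exists_bound_forall_exists_mem_ball (‖f ·‖) r
  choose! θ hθI hθN hθr using hN
  obtain ⟨ρ, hρ⟩ := exists_closedBall_subset_of_forall_mem_nhds (K := Box.Icc I)
    (W := fun x => ball (θ x) (r (θ x))) fun x hx => isOpen_ball.mem_nhds (hθr x hx)
  refine ⟨N, fun π₀ => ?_⟩
  set π := π₀.toSubordinate ρ
  let π' : TaggedPrepartition I :=
    ⟨π.toPrepartition, fun J => θ (π.tag J), fun J => hθI _ (π.tag_mem_Icc J)⟩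
  have hπ' : π'.IsSubordinate r := fun J hJ =>
    ((π₀.isSubordinate_toSubordinate ρ J hJ).trans (hρ _ (π.tag_mem_Icc J))).trans
      ball_subset_closedBall
  have hU : π'.iUnion = π₀.iUnion := π₀.iUnion_toSubordinate ρ
  have hsum : ‖integralSum f μ.toBoxAdditive.toSMul π'‖ ≤ N * μ.real π₀.iUnion := by
    rw [← hU, TaggedPrepartition.iUnion, π'.measure_iUnion_toReal μ, Finset.mul_sum]
    refine (norm_sum_le _ _).trans (Finset.sum_le_sum fun J _ => ?_)
    rw [BoxAdditiveMap.toSMul_apply, Measure.toBoxAdditive_apply, norm_smul,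
      Real.norm_of_nonneg measureReal_nonneg, mul_comm]
    exact mul_le_mul_of_nonneg_right (hθN _ (π.tag_mem_Icc J)) measureReal_nonneg
  have hSH := hr π' hπ' π'.boxes subset_rfl
  rw [Finset.sum_sub_distrib] at hSH
  calc ‖∑ J ∈ π₀.boxes, integral J McShane f μ.toBoxAdditive.toSMul‖
      = ‖∑ J ∈ π'.boxes, integral J McShane f μ.toBoxAdditive.toSMul‖ := by
        rw [hf.sum_integral_congr hU]
    _ ≤ ‖integralSum f μ.toBoxAdditive.toSMul π'‖
        + ‖integralSum f μ.toBoxAdditive.toSMul π'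
          - ∑ J ∈ π'.boxes, integral J McShane f μ.toBoxAdditive.toSMul‖ := by
        rw [norm_sub_rev]; exact norm_le_insert' _ _
    _ ≤ ε + N * μ.real π₀.iUnion := by rw [add_comm]; exact add_le_add hSH hsum

theorem Integrable.exists_pos_forall_norm_sum_integral_le
    (hf : Integrable I McShane f μ.toBoxAdditive.toSMul) {ε : ℝ} (hε : 0 < ε) :
    ∃ η > 0, ∀ π₀ : Prepartition I, μ.real π₀.iUnion ≤ η →
      ‖∑ J ∈ π₀.boxes, integral J McShane f μ.toBoxAdditive.toSMul‖ ≤ ε := by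
  obtain ⟨N, hN⟩ := hf.exists_norm_sum_integral_le_add_mul (half_pos hε)
  refine ⟨ε / 2 / (|N| + 1), by positivity, fun π₀ hπ₀ => (hN π₀).trans ?_⟩
  calc ε / 2 + N * μ.real π₀.iUnion ≤ ε / 2 + (|N| + 1) * (ε / 2 / (|N| + 1)) := by
        gcongr
        exact (le_abs_self N).trans (le_add_of_nonneg_right zero_le_one)
    _ = ε := by field_simp; ring

theorem Integrable.exists_forall_norm_sum_integral_le
    (hf : Integrable I McShane f μ.toBoxAdditive.toSMul) :
    ∃ A, ∀ π₀ : Prepartition I,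
      ‖∑ J ∈ π₀.boxes, integral J McShane f μ.toBoxAdditive.toSMul‖ ≤ A := by
  obtain ⟨N, hN⟩ := hf.exists_norm_sum_integral_le_add_mul one_pos
  refine ⟨1 + |N| * μ.real (I : Set (ι → ℝ)), fun π₀ => (hN π₀).trans ?_⟩
  gcongr
  · exact le_abs_self N
  · exact (I.measure_coe_lt_top μ).ne
  · exact π₀.iUnion_subset

theorem Integrable.exists_forall_norm_sum_smul_le
    (hf : Integrable I McShane f μ.toBoxAdditive.toSMul) :
    ∃ A, ∃ r : (ι → ℝ) → Ioi (0 : ℝ), ∀ π : TaggedPrepartition I, π.IsSubordinate r →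
      ∀ t ⊆ π.boxes, ‖∑ J ∈ t, μ.real J • f (π.tag J)‖ ≤ A := by
  classical
  obtain ⟨A, hA⟩ := hf.exists_forall_norm_sum_integral_le
  obtain ⟨r, hr⟩ := hf.exists_norm_sum_sub_integral_le one_pos
  refine ⟨1 + A, r, fun π hπ t ht => ?_⟩
  have hΦ := hA (π.toPrepartition.filter (· ∈ t))
  rw [Prepartition.boxes_filter_mem ht] at hΦ
  have hSH := hr π hπ t ht
  simp only [BoxAdditiveMap.toSMul_apply, Measure.toBoxAdditive_apply,
    Finset.sum_sub_distrib] at hSH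
  exact (norm_le_norm_sub_add _ _).trans (add_le_add hSH hΦ)

theorem exists_measureReal_iUnion_filter_inf_compl_le {s : Set (ι → ℝ)} (hs : MeasurableSet s)
    (I : Box ι) {η : ℝ} (hη : 0 < η) :
    ∃ r : (ι → ℝ) → Ioi (0 : ℝ), ∀ π π' : TaggedPrepartition I, π.IsSubordinate r →
      π'.IsSubordinate r → π'.IsPartition →
      μ.real (π.toPrepartition.filter (π.tag · ∈ s) ⊓
        (π'.toPrepartition.filter (π'.tag · ∈ s)).compl).iUnion ≤ η := by
  classical
  have hfin : μ (s ∩ Box.Icc I) ≠ ∞ :=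
    ((measure_mono inter_subset_right).trans_lt (I.measure_Icc_lt_top μ)).ne
  have hη₂ : ENNReal.ofReal (η / 2) ≠ 0 := by simpa using half_pos hη
  obtain ⟨F, hFs, hFc, hμF⟩ := (hs.inter I.measurableSet_Icc).exists_isClosed_sdiff_lt hfin hη₂
  obtain ⟨U, hsU, hUo, -, hμU⟩ := (hs.inter I.measurableSet_Icc).exists_isOpen_sdiff_lt hfin hη₂
  obtain ⟨r, hr⟩ := exists_closedBall_subset_of_forall_mem_nhds (K := Box.Icc I)
    (W := fun x => if x ∈ s then U else Fᶜ) fun x hx => by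
      split_ifs with hxs
      · exact hUo.mem_nhds (hsU ⟨hxs, hx⟩)
      · exact hFc.isOpen_compl.mem_nhds fun hxF => hxs (hFs hxF).1
  refine ⟨r, fun π π' hπ hπ' hp' => ENNReal.toReal_le_of_le_ofReal hη.le ?_⟩
  have hsub := TaggedPrepartition.iUnion_filter_inf_compl_subset (s := s)
    (fun x hx hxs => by simpa only [if_pos hxs] using hr x hx)
    (fun x hx hxs => by simpa only [if_neg hxs] using hr x hx) hπ hπ' hp'
  calc μ _ ≤ μ ((U \ (s ∩ Box.Icc I)) ∪ ((s ∩ Box.Icc I) \ F)) :=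
        measure_mono (hsub.trans (sdiff_union_sdiff_cancel hsU hFs).superset)
    _ ≤ μ (U \ (s ∩ Box.Icc I)) + μ ((s ∩ Box.Icc I) \ F) := measure_union_le _ _
    _ ≤ ENNReal.ofReal (η / 2) + ENNReal.ofReal (η / 2) := add_le_add hμU.le hμF.le
    _ = ENNReal.ofReal η := by
        rw [← ENNReal.ofReal_add (by positivity) (by positivity), add_halves]

theorem Integrable.indicator (hf : Integrable I McShane f μ.toBoxAdditive.toSMul)
    {s : Set (ι → ℝ)} (hs : MeasurableSet s) :
    Integrable I McShane (s.indicator f) μ.toBoxAdditive.toSMul := by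
  classical
  refine integrable_mcShane_of_forall_dist_integralSum_le fun ε hε => ?_
  obtain ⟨r₁, hr₁⟩ := hf.exists_norm_sum_sub_integral_le (ε := ε / 4) (by positivity)
  obtain ⟨η, hη, hΦ⟩ := hf.exists_pos_forall_norm_sum_integral_le (ε := ε / 4) (by positivity)
  obtain ⟨r₂, hr₂⟩ := exists_measureReal_iUnion_filter_inf_compl_le (μ := μ) hs I hη
  refine ⟨fun x => min (r₁ x) (r₂ x), fun π₁ π₂ h₁ hp₁ h₂ hp₂ => ?_⟩
  set Φ : Prepartition I → E :=
    fun π₀ => ∑ J ∈ π₀.boxes, integral J McShane f μ.toBoxAdditive.toSMul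
  set A : TaggedPrepartition I → Prepartition I := fun π => π.toPrepartition.filter (π.tag · ∈ s)
  set S := integralSum (s.indicator f) μ.toBoxAdditive.toSMul
  have hS : ∀ π : TaggedPrepartition I, π.IsSubordinate r₁ → ‖S π - Φ (A π)‖ ≤ ε / 4 := by
    intro π hπ
    have := hr₁ π hπ (A π).boxes (Finset.filter_subset _ _)
    rw [Finset.sum_sub_distrib] at this
    convert this using 3
    simp [S, A, integralSum, Finset.sum_filter, Set.indicator_apply, smul_ite]
  have hr₁₂ : ∀ π : TaggedPrepartition I, π.IsSubordinate (fun x => min (r₁ x) (r₂ x)) →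
      π.IsSubordinate r₁ ∧ π.IsSubordinate r₂ := fun π hπ =>
    ⟨hπ.mono fun x _ => min_le_left _ _, hπ.mono fun x _ => min_le_right _ _⟩
  obtain ⟨h₁r₁, h₁r₂⟩ := hr₁₂ π₁ h₁
  obtain ⟨h₂r₁, h₂r₂⟩ := hr₁₂ π₂ h₂
  have hsplit : Φ (A π₁) - Φ (A π₂) = Φ (A π₁ ⊓ (A π₂).compl) - Φ (A π₂ ⊓ (A π₁).compl) :=
    hf.sum_integral_sub_sum_integral _ _
  rw [dist_eq_norm]
  calc ‖S π₁ - S π₂‖ = ‖(S π₁ - Φ (A π₁)) - (S π₂ - Φ (A π₂))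
        + (Φ (A π₁ ⊓ (A π₂).compl) - Φ (A π₂ ⊓ (A π₁).compl))‖ := by
        rw [← hsplit]; congr 1; abel
    _ ≤ ε / 4 + ε / 4 + (ε / 4 + ε / 4) :=
        (norm_add_le _ _).trans (add_le_add
          ((norm_sub_le _ _).trans (add_le_add (hS π₁ h₁r₁) (hS π₂ h₂r₁)))
          ((norm_sub_le _ _).trans (add_le_add (hΦ _ (hr₂ π₁ π₂ h₁r₂ h₂r₂ hp₂))
            (hΦ _ (hr₂ π₂ π₁ h₂r₂ h₁r₂ hp₁)))))
    _ = ε := by ring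

theorem Integrable.smul_of_finite_image (hf : Integrable I McShane f μ.toBoxAdditive.toSMul)
    {σ : (ι → ℝ) → ℝ} (hσ : Measurable σ) (hfin : (σ '' Box.Icc I).Finite) :
    Integrable I McShane (fun x => σ x • f x) μ.toBoxAdditive.toSMul := by
  classical
  have hsum := HasIntegral.sum fun c (_ : c ∈ hfin.toFinset) =>
    (hf.indicator (hσ (measurableSet_singleton c))).hasIntegral.smul c
  refine ⟨_, (hasIntegral_congr I McShane (fun x hx => ?_) (fun _ _ => rfl) _).1 hsum⟩
  rw [Finset.sum_eq_single (σ x)]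
  · simp
  · intro c _ hc
    simp [Set.indicator_of_notMem (show x ∉ σ ⁻¹' {c} from Ne.symm hc)]
  · exact fun h => absurd (hfin.mem_toFinset.2 ⟨x, hx, rfl⟩) h

theorem Integrable.smul_of_measurable (hf : Integrable I McShane f μ.toBoxAdditive.toSMul)
    {β : (ι → ℝ) → ℝ} (hβ : Measurable β) {C : ℝ} (hC : ∀ x ∈ Box.Icc I, |β x| ≤ C) :
    Integrable I McShane (fun x => β x • f x) μ.toBoxAdditive.toSMul := by
  obtain ⟨A, r, hA⟩ := hf.exists_forall_norm_sum_smul_le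
  refine integrable_mcShane_of_forall_exists_dist_integralSum_le fun ε hε => ?_
  set δ := ε / (2 * (|A| + 1))
  have hδ : 0 < δ := by positivity
  set σ : (ι → ℝ) → ℝ := fun x => ⌊β x / δ⌋ * δ
  have hσ : Measurable σ := by fun_prop
  have hfin : (σ '' Box.Icc I).Finite := by
    refine ((Set.finite_Icc ⌊-C / δ⌋ ⌊C / δ⌋).image fun m : ℤ => (m : ℝ) * δ).subset ?_
    rintro _ ⟨x, hx, rfl⟩
    obtain ⟨hCl, hCu⟩ := abs_le.1 (hC x hx)
    exact ⟨⌊β x / δ⌋, ⟨Int.floor_mono (by gcongr), Int.floor_mono (by gcongr)⟩, rfl⟩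
  have hβσ : ∀ x, |β x - σ x| ≤ δ := fun x => abs_le.2
    ⟨by linarith [Int.sub_floor_div_mul_nonneg (β x) hδ], (Int.sub_floor_div_mul_lt (β x) hδ).le⟩
  refine ⟨fun x => σ x • f x, hf.smul_of_finite_image hσ hfin, r, fun π hπ => ?_⟩
  calc dist (integralSum (fun x => β x • f x) μ.toBoxAdditive.toSMul π)
        (integralSum (fun x => σ x • f x) μ.toBoxAdditive.toSMul π)
      = ‖∑ J ∈ π.boxes, (β (π.tag J) - σ (π.tag J)) • (μ.real J • f (π.tag J))‖ := by
        simp only [dist_eq_norm, integralSum, BoxAdditiveMap.toSMul_apply,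
          Measure.toBoxAdditive_apply, ← Finset.sum_sub_distrib, sub_smul, smul_comm (μ.real _)]
    _ ≤ 2 * δ * A := norm_sum_smul_le_of_forall_subset hδ.le (fun J _ => hβσ _) (hA π hπ)
    _ ≤ 2 * δ * (|A| + 1) := by gcongr; linarith [le_abs_self A]
    _ = ε := by simp only [δ]; field_simp

end

end BoxIntegral

/-- If `g : [0,1] → X` is McShane integrable and `α : [0,1] → ℝ` is bounded and measurable,
then `t ↦ α t • g t` is McShane integrable on `[0,1]`. -/
theorem mcShane_integrable_smul {X : Type*} [NormedAddCommGroup X] [NormedSpace ℝ X]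
    [CompleteSpace X] (g : ℝ → X) (α : ℝ → ℝ) (hαm : Measurable α) (C : ℝ)
    (hαb : ∀ t ∈ Set.Icc (0 : ℝ) 1, |α t| ≤ C) (y : X)
    (hg : BoxIntegral.HasIntegral unitBox BoxIntegral.IntegrationParams.McShane
      (fun v => g (v 0)) volume.toBoxAdditive.toSMul y) :
    ∃ z : X, BoxIntegral.HasIntegral unitBox BoxIntegral.IntegrationParams.McShane
      (fun v => α (v 0) • g (v 0)) volume.toBoxAdditive.toSMul z := by
  have hβ : Measurable fun v : Fin 1 → ℝ => α (v 0) := hαm.comp (measurable_pi_apply 0)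
  exact hg.integrable.smul_of_measurable hβ fun v hv => hαb (v 0) ⟨hv.1 0, hv.2 0⟩
end

section
/- Let X be a real Banach space and g : [0,1] → X Bochner integrable with respect to Lebesgue measure. Then the set IS_G = { ∫₀¹ φ(t) • g(t) dt : φ : [0,1] → ℝ measurable with 0 ≤ φ(t) ≤ 1 for all t } is convex and compact in the weak topology of X. -/
/-!
As classes in `L²(μ)`, the admissible weights `φ` form, through the Riesz isomorphism, a subset of
the dual of `L²(μ)` cut out by the weak-* closed conditions `∫_A φ ∈ [0, μ A]`; it is bounded, hence
weak-* compact by Banach–Alaoglu. On this set `φ ↦ ∫ φ • g` is continuous into the norm topology of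
`X`: for a simple function `s`, `∫ φ • s` depends only on the finitely many pairings `⟪φ, 1_A⟫` with
the fibres `A` of `s`, and replacing `g` by `s` moves `∫ φ • g` by at most `‖g - s‖₁`, uniformly in
`φ`. So `IS_G` is even norm compact; convexity is linearity of the integral.
-/

open MeasureTheory

section WeightedIntegrals

open Set Filter Topology InnerProductSpace

variable {α : Type*} [MeasurableSpace α] {μ : Measure α}
variable {X : Type*} [NormedAddCommGroup X] [NormedSpace ℝ X]

theorem norm_le_one_of_mem_Icc {t : ℝ} (ht : t ∈ Icc (0 : ℝ) 1) : ‖t‖ ≤ 1 := by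
  rw [Real.norm_of_nonneg ht.1]
  exact ht.2

variable (μ) in
def unitIntervalL2 : Set (Lp ℝ 2 μ) := {h | ∀ᵐ x ∂μ, h x ∈ Icc (0 : ℝ) 1}

variable (μ) in
noncomputable def toWeakDualL2 (h : Lp ℝ 2 μ) : WeakDual ℝ (Lp ℝ 2 μ) :=
  StrongDual.toWeakDual (toDual ℝ _ h)

theorem toWeakDualL2_apply (h f : Lp ℝ 2 μ) : toWeakDualL2 μ h f = ⟪h, f⟫_ℝ := rfl

theorem toDual_symm_toWeakDualL2 (h : Lp ℝ 2 μ) :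
    (toDual ℝ _).symm (WeakDual.toStrongDual (toWeakDualL2 μ h)) = h :=
  (toDual ℝ _).symm_apply_apply h

variable (μ) in
def weightedIntegrals (g : α → X) : Set X :=
  {x | ∃ φ : α → ℝ, Measurable φ ∧ (∀ t, φ t ∈ Icc (0 : ℝ) 1) ∧ x = ∫ t, φ t • g t ∂μ}

theorem convex_weightedIntegrals {g : α → X} (hg : Integrable g μ) :
    Convex ℝ (weightedIntegrals μ g) := by
  rintro _ ⟨φ, hφm, hφ, rfl⟩ _ ⟨ψ, hψm, hψ, rfl⟩ a b ha hb hab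
  refine ⟨fun t => a * φ t + b * ψ t, by fun_prop,
    fun t => convex_Icc (0 : ℝ) 1 (hφ t) (hψ t) ha hb hab, ?_⟩
  have hint : ∀ {χ : α → ℝ}, Measurable χ → (∀ t, χ t ∈ Icc (0 : ℝ) 1) →
      Integrable (fun t => χ t • g t) μ := fun hχm hχ =>
    hg.bdd_smul 1 hχm.aestronglyMeasurable (ae_of_all _ fun t => norm_le_one_of_mem_Icc (hχ t))
  have hφg : Integrable (fun t => a • (φ t • g t)) μ := (hint hφm hφ).smul a
  have hψg : Integrable (fun t => b • (ψ t • g t)) μ := (hint hψm hψ).smul b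
  simp_rw [add_smul, mul_smul]
  rw [integral_add hφg hψg, integral_smul, integral_smul]

theorem integral_smul_simpleFunc_eq_sum [CompleteSpace X] {h : α → ℝ} (hh : Integrable h μ)
    (s : SimpleFunc α X) :
    ∫ x, h x • s x ∂μ = ∑ v ∈ s.range, (∫ x in s ⁻¹' {v}, h x ∂μ) • v := by
  have hdecomp : ∀ x, h x • s x = ∑ v ∈ s.range, (s ⁻¹' {v}).indicator h x • v := by
    intro x
    rw [Finset.sum_eq_single_of_mem (s x) (s.mem_range_self x)]
    · rw [indicator_of_mem (by simp)]
    · intro v _ hne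
      rw [indicator_of_notMem (by simpa using Ne.symm hne), zero_smul]
  simp_rw [hdecomp]
  rw [integral_finsetSum _ fun v _ => (hh.indicator (s.measurableSet_fiber v)).smul_const v]
  simp_rw [integral_smul_const, integral_indicator (s.measurableSet_fiber _)]

theorem enorm_integral_smul_sub_le {h : α → ℝ} (hhm : AEStronglyMeasurable h μ)
    (hh : ∀ᵐ x ∂μ, ‖h x‖ ≤ 1) {f₁ f₂ : α → X} (hf₁ : Integrable f₁ μ) (hf₂ : Integrable f₂ μ) :
    ‖∫ x, h x • f₁ x ∂μ - ∫ x, h x • f₂ x ∂μ‖ₑ ≤ eLpNorm (f₁ - f₂) 1 μ := by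
  have hi₁ : Integrable (fun x => h x • f₁ x) μ := hf₁.bdd_smul 1 hhm hh
  have hi₂ : Integrable (fun x => h x • f₂ x) μ := hf₂.bdd_smul 1 hhm hh
  rw [← integral_sub hi₁ hi₂, eLpNorm_one_eq_lintegral_enorm]
  refine (enorm_integral_le_lintegral_enorm _).trans (lintegral_mono_ae ?_)
  filter_upwards [hh] with x hx
  rw [← smul_sub, enorm_smul]
  exact mul_le_of_le_one_left' (by simpa [← ofReal_norm] using hx)

variable [IsFiniteMeasure μ]

theorem real_inner_indicatorConstLp_one_right {A : Set α} (hA : MeasurableSet A) (h : Lp ℝ 2 μ) :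
    ⟪h, indicatorConstLp 2 hA (measure_ne_top μ A) (1 : ℝ)⟫_ℝ = ∫ x in A, h x ∂μ := by
  rw [real_inner_comm, L2.inner_indicatorConstLp_one]

theorem mem_unitIntervalL2_iff {h : Lp ℝ 2 μ} :
    h ∈ unitIntervalL2 μ ↔ ∀ A, MeasurableSet A → ∫ x in A, h x ∂μ ∈ Icc 0 (μ.real A) := by
  have hi : Integrable h μ := (Lp.memLp h).integrable one_le_two
  constructor
  · intro (hh : ∀ᵐ x ∂μ, h x ∈ Icc 0 1) A hA
    refine ⟨setIntegral_nonneg_ae hA (hh.mono fun x hx _ => hx.1), ?_⟩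
    simpa using setIntegral_mono_ae_restrict hi.integrableOn
      (integrableOn_const (measure_ne_top μ A)) (ae_restrict_of_ae (hh.mono fun x hx => hx.2))
  · intro hset
    have h0 : 0 ≤ᵐ[μ] h :=
      ae_nonneg_of_forall_setIntegral_nonneg hi fun A hA _ => (hset A hA).1
    have h1 : h ≤ᵐ[μ] fun _ => (1 : ℝ) :=
      ae_le_of_forall_setIntegral_le hi (integrable_const 1) fun A hA _ => by
        simpa using (hset A hA).2
    filter_upwards [h0, h1] with x hx0 hx1 using ⟨hx0, hx1⟩

theorem image_toWeakDualL2_unitIntervalL2 :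
    toWeakDualL2 μ '' unitIntervalL2 μ = ⋂ (A : Set α) (hA : MeasurableSet A),
      {ξ | ξ (indicatorConstLp 2 hA (measure_ne_top μ A) (1 : ℝ)) ∈ Icc 0 (μ.real A)} := by
  ext ξ
  simp only [mem_iInter, mem_ofPred_eq]
  constructor
  · rintro ⟨h, hh, rfl⟩ A hA
    simpa [toWeakDualL2_apply, real_inner_indicatorConstLp_one_right] using
      mem_unitIntervalL2_iff.1 hh A hA
  · intro hξ
    refine ⟨(toDual ℝ _).symm (WeakDual.toStrongDual ξ),
      mem_unitIntervalL2_iff.2 fun A hA => ?_, by simp [toWeakDualL2]⟩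
    rw [← real_inner_indicatorConstLp_one_right hA, toDual_symm_apply]
    exact hξ A hA

theorem isCompact_image_toWeakDualL2_unitIntervalL2 :
    IsCompact (toWeakDualL2 μ '' unitIntervalL2 μ) := by
  refine WeakDual.isCompact_of_bounded_of_closed ?_ ?_
  · refine (WeakDual.isBounded_closedBall (0 : StrongDual ℝ (Lp ℝ 2 μ))
      (measureUnivNNReal μ ^ (2 : ENNReal).toReal⁻¹ * 1)).subset ?_
    rintro _ ⟨h, hh, rfl⟩
    simp only [mem_preimage, Metric.mem_closedBall, dist_zero_right]
    have hbound : ∀ᵐ x ∂μ, ‖h x‖ ≤ 1 := Eventually.mono hh fun x hx => norm_le_one_of_mem_Icc hx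
    exact ((toDual ℝ _).norm_map h).trans_le (Lp.norm_le_of_ae_bound zero_le_one hbound)
  · rw [image_toWeakDualL2_unitIntervalL2]
    exact isClosed_iInter fun A => isClosed_iInter fun hA =>
      isClosed_Icc.preimage (WeakDual.eval_continuous _)

theorem weightedIntegrals_eq_image (g : α → X) :
    weightedIntegrals μ g = (fun h : Lp ℝ 2 μ => ∫ x, h x • g x ∂μ) '' unitIntervalL2 μ := by
  ext y
  constructor
  · rintro ⟨φ, hφm, hφ, rfl⟩
    have hφL2 : MemLp φ 2 μ := MemLp.of_bound hφm.aestronglyMeasurable 1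
      (ae_of_all _ fun t => norm_le_one_of_mem_Icc (hφ t))
    refine ⟨hφL2.toLp φ, hφL2.coeFn_toLp.mono fun t ht => ht ▸ hφ t, ?_⟩
    exact integral_congr_ae (hφL2.coeFn_toLp.mono fun t ht => by simp only [ht])
  · rintro ⟨h, hh, rfl⟩
    have hm := Lp.aestronglyMeasurable h
    -- a representative of `h` with values in `[0, 1]` everywhere, not just almost everywhere
    refine ⟨fun t => projIcc 0 1 zero_le_one (hm.mk h t),
      (continuous_subtype_val.comp (continuous_projIcc (h := zero_le_one))).measurable.comp
        hm.stronglyMeasurable_mk.measurable,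
      fun t => Subtype.prop _, integral_congr_ae ?_⟩
    filter_upwards [hm.ae_eq_mk, hh] with t ht hht
    rw [← ht, projIcc_of_mem _ hht]

theorem continuousOn_integral_toDual_symm_smul [CompleteSpace X] {g : α → X}
    (hg : Integrable g μ) :
    ContinuousOn (fun ξ : WeakDual ℝ (Lp ℝ 2 μ) =>
      ∫ x, (toDual ℝ _).symm (WeakDual.toStrongDual ξ) x • g x ∂μ)
      (toWeakDualL2 μ '' unitIntervalL2 μ) := by
  refine continuousOn_of_uniform_approx_of_continuousOn fun u hu => ?_
  obtain ⟨ε, hε, hεu⟩ := mem_uniformity_edist.1 hu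
  obtain ⟨s, hgs, hs⟩ := (memLp_one_iff_integrable.2 hg).exists_simpleFunc_eLpNorm_sub_lt
    ENNReal.one_ne_top hε.ne'
  refine ⟨fun ξ => ∑ v ∈ s.range,
      ξ (indicatorConstLp 2 (s.measurableSet_fiber v) (measure_ne_top μ _) (1 : ℝ)) • v,
    (continuous_finsetSum _ fun v _ =>
      (WeakDual.eval_continuous _).smul continuous_const).continuousOn, ?_⟩
  rintro _ ⟨h, hh, rfl⟩
  apply hεu
  have hbound : ∀ᵐ x ∂μ, ‖h x‖ ≤ 1 := Eventually.mono hh fun x hx => norm_le_one_of_mem_Icc hx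
  have hsum := integral_smul_simpleFunc_eq_sum ((Lp.memLp h).integrable one_le_two) s
  rw [toDual_symm_toWeakDualL2]
  simp only [toWeakDualL2_apply, real_inner_indicatorConstLp_one_right, ← hsum, edist_eq_enorm_sub]
  exact (enorm_integral_smul_sub_le (Lp.aestronglyMeasurable h) hbound hg
    (memLp_one_iff_integrable.1 hs)).trans_lt hgs

theorem isCompact_weightedIntegrals [CompleteSpace X] {g : α → X} (hg : Integrable g μ) :
    IsCompact (weightedIntegrals μ g) := by
  have himage : weightedIntegrals μ g = (fun ξ : WeakDual ℝ (Lp ℝ 2 μ) =>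
      ∫ x, (toDual ℝ _).symm (WeakDual.toStrongDual ξ) x • g x ∂μ) ''
        (toWeakDualL2 μ '' unitIntervalL2 μ) := by
    simp only [weightedIntegrals_eq_image, image_image, toDual_symm_toWeakDualL2]
  rw [himage]
  exact isCompact_image_toWeakDualL2_unitIntervalL2.image_of_continuousOn
    (continuousOn_integral_toDual_symm_smul hg)

end WeightedIntegrals

/-- For a Bochner integrable `g : [0,1] → X`, the set
`IS_G = { ∫₀¹ φ(t) • g(t) dt : φ measurable, 0 ≤ φ ≤ 1 }` is convex and compact in the weak
topology of `X`. -/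
theorem ISG_convex_weaklyCompact {X : Type*} [NormedAddCommGroup X] [NormedSpace ℝ X]
    [CompleteSpace X] (g : ℝ → X)
    (hg : Integrable g (volume.restrict (Set.Icc (0 : ℝ) 1))) :
    Convex ℝ {x : X | ∃ φ : ℝ → ℝ, Measurable φ ∧ (∀ t, φ t ∈ Set.Icc (0 : ℝ) 1) ∧
        x = ∫ t in Set.Icc (0 : ℝ) 1, φ t • g t} ∧
      IsCompact (toWeakSpace ℝ X ''
        {x : X | ∃ φ : ℝ → ℝ, Measurable φ ∧ (∀ t, φ t ∈ Set.Icc (0 : ℝ) 1) ∧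
          x = ∫ t in Set.Icc (0 : ℝ) 1, φ t • g t}) :=
  ⟨convex_weightedIntegrals hg,
    (isCompact_weightedIntegrals hg).image (toWeakSpaceCLM ℝ X).continuous⟩
end

section
/- Let X be a real Banach space and g : [0,1] → X Bochner integrable with respect to Lebesgue measure. Then { ∫₀¹ φ(t) • g(t) dt : φ : [0,1] → ℝ measurable with 0 ≤ φ ≤ 1 } equals the norm closure of { ∫₀¹ s(t) • g(t) dt : s : [0,1] → ℝ a simple (finitely-valued measurable) function with 0 ≤ s ≤ 1 }. -/
/-!
The inclusion `⊆` is dominated convergence along simple approximations of `φ`; for `⊇` it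
suffices that the left-hand set is closed. If `∫ ψₙ • g → x`, the `ψₙ` lie in the unit ball
of the separable Hilbert space `L²[0,1]`, so by sequential Banach–Alaoglu a subsequence
converges weakly to some `h`. Testing against indicators gives `∫_A ψₙ → ∫_A h` for every
measurable `A`, which forces `0 ≤ h ≤ 1` a.e. Since the maps `f ↦ ∫ ψ • f` are uniformly
`1`-Lipschitz on `L¹(X)`, this convergence on indicators extends to all integrable `f`,
whence `x = ∫ h • g`.
-/

open MeasureTheory Set Filter Topology

open scoped InnerProductSpace ENNReal

theorem Real.norm_le_one_of_mem_Icc {c : ℝ} (hc : c ∈ Icc 0 1) : ‖c‖ ≤ 1 := by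
  rw [Real.norm_of_nonneg hc.1]; exact hc.2

theorem exists_subseq_tendsto_inner {E : Type*} [NormedAddCommGroup E] [InnerProductSpace ℝ E]
    [CompleteSpace E] [TopologicalSpace.SeparableSpace E] {u : ℕ → E} {C : ℝ}
    (hu : ∀ n, ‖u n‖ ≤ C) :
    ∃ σ : ℕ → ℕ, StrictMono σ ∧ ∃ h : E,
      ∀ w, Tendsto (fun n ↦ ⟪u (σ n), w⟫_ℝ) atTop (𝓝 ⟪h, w⟫_ℝ) := by
  let v : ℕ → WeakDual ℝ E := fun n ↦ StrongDual.toWeakDual (InnerProductSpace.toDual ℝ E (u n))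
  have hv : ∀ n, v n ∈ WeakDual.toStrongDual ⁻¹' Metric.closedBall 0 C := fun n ↦ by
    simpa [v] using hu n
  obtain ⟨ℓ, -, σ, hσ, hlim⟩ := WeakDual.isSeqCompact_closedBall ℝ E 0 C hv
  refine ⟨σ, hσ, (InnerProductSpace.toDual ℝ E).symm (WeakDual.toStrongDual ℓ), fun w ↦ ?_⟩
  have := ((WeakDual.eval_continuous w).tendsto ℓ).comp hlim
  simpa [v, Function.comp_def, InnerProductSpace.toDual_apply_apply] using this

section

variable {α : Type*} [MeasurableSpace α] {μ : Measure α}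
  {X : Type*} [NormedAddCommGroup X] [NormedSpace ℝ X]

theorem ae_mem_Icc_of_setIntegral_mem_Icc [IsFiniteMeasure μ] {h : α → ℝ} (hh : Integrable h μ)
    (H : ∀ s, MeasurableSet s → ∫ x in s, h x ∂μ ∈ Icc 0 (μ.real s)) :
    ∀ᵐ x ∂μ, h x ∈ Icc 0 1 := by
  have h0 : 0 ≤ᵐ[μ] h := ae_nonneg_of_forall_setIntegral_nonneg hh fun s hs _ ↦ (H s hs).1
  have h1 : h ≤ᵐ[μ] fun _ ↦ 1 := ae_le_of_forall_setIntegral_le hh (integrable_const 1)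
    fun s hs _ ↦ by simpa using (H s hs).2
  filter_upwards [h0, h1] with x hx0 hx1 using ⟨hx0, hx1⟩

theorem exists_subseq_tendsto_setIntegral [IsFiniteMeasure μ] [IsSeparable μ]
    {ψ : ℕ → α → ℝ} (hψ : ∀ n, AEStronglyMeasurable (ψ n) μ) {C : ℝ} (hC : ∀ n x, ‖ψ n x‖ ≤ C) :
    ∃ σ : ℕ → ℕ, StrictMono σ ∧ ∃ h : Lp ℝ 2 μ, ∀ s, MeasurableSet s →
      Tendsto (fun n ↦ ∫ x in s, ψ (σ n) x ∂μ) atTop (𝓝 (∫ x in s, h x ∂μ)) := by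
  -- makes `Lp ℝ 2 μ` separable, via `Lp.SecondCountableTopology`
  have : Fact ((2 : ℝ≥0∞) ≠ ∞) := ⟨by simp⟩
  have hmem : ∀ n, MemLp (ψ n) 2 μ := fun n ↦ .of_bound (hψ n) C (ae_of_all _ (hC n))
  obtain ⟨σ, hσ, h, hlim⟩ := exists_subseq_tendsto_inner (u := fun n ↦ (hmem n).toLp)
    fun n ↦ Lp.norm_le_of_ae_bound (abs_nonneg C) <| (hmem n).coeFn_toLp.mono fun x hx ↦ by
      simpa [hx] using (hC n x).trans (le_abs_self C)
  refine ⟨σ, hσ, h, fun s hs ↦ ?_⟩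
  have := hlim (indicatorConstLp 2 hs (measure_ne_top μ s) 1)
  rw [real_inner_comm, L2.inner_indicatorConstLp_one] at this
  refine this.congr fun n ↦ ?_
  rw [real_inner_comm, L2.inner_indicatorConstLp_one]
  exact integral_congr_ae (ae_restrict_of_ae (hmem _).coeFn_toLp)

theorem exists_subseq_tendsto_setIntegral_of_mem_Icc [IsFiniteMeasure μ] [IsSeparable μ]
    {ψ : ℕ → α → ℝ} (hψ : ∀ n, Measurable (ψ n)) (hψ01 : ∀ n x, ψ n x ∈ Icc 0 1) :
    ∃ σ : ℕ → ℕ, StrictMono σ ∧ ∃ φ : α → ℝ, Measurable φ ∧ (∀ x, φ x ∈ Icc 0 1) ∧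
      ∀ s, MeasurableSet s →
        Tendsto (fun n ↦ ∫ x in s, ψ (σ n) x ∂μ) atTop (𝓝 (∫ x in s, φ x ∂μ)) := by
  have hψ1 : ∀ n x, ‖ψ n x‖ ≤ 1 := fun n x ↦ Real.norm_le_one_of_mem_Icc (hψ01 n x)
  obtain ⟨σ, hσ, h, hlim⟩ :=
    exists_subseq_tendsto_setIntegral (μ := μ) (fun n ↦ (hψ n).aestronglyMeasurable) hψ1
  have hbounds : ∀ s, MeasurableSet s → ∫ x in s, h x ∂μ ∈ Icc 0 (μ.real s) := fun s hs ↦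
    ⟨ge_of_tendsto' (hlim s hs) fun n ↦ setIntegral_nonneg hs fun x _ ↦ (hψ01 _ x).1,
      le_of_tendsto' (hlim s hs) fun n ↦ (Real.le_norm_self _).trans <| by
        simpa using norm_setIntegral_le_of_norm_le_const (measure_lt_top μ s)
          fun x _ ↦ hψ1 (σ n) x⟩
  have hae := ae_mem_Icc_of_setIntegral_mem_Icc ((Lp.memLp h).integrable one_le_two) hbounds
  refine ⟨σ, hσ, fun x ↦ projIcc 0 1 zero_le_one (h x),
    (continuous_subtype_val.comp (continuous_projIcc (h := zero_le_one))).measurable.comp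
      (Lp.stronglyMeasurable h).measurable,
    fun x ↦ (projIcc 0 1 zero_le_one (h x)).2, fun s hs ↦ ?_⟩
  convert hlim s hs using 2
  refine integral_congr_ae (ae_restrict_of_ae (hae.mono fun x hx ↦ ?_))
  simp [projIcc_of_mem _ hx]

theorem lipschitzWith_integral_smul_L1 {ψ : α → ℝ} (hψ : AEStronglyMeasurable ψ μ)
    (hψ1 : ∀ x, ‖ψ x‖ ≤ 1) : LipschitzWith 1 fun f : α →₁[μ] X ↦ ∫ x, ψ x • f x ∂μ := by
  refine LipschitzWith.of_dist_le_mul fun f f' ↦ ?_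
  have hint : ∀ f : α →₁[μ] X, Integrable (fun x ↦ ψ x • f x) μ := fun f ↦
    (L1.integrable_coeFn f).bdd_smul 1 hψ (ae_of_all _ hψ1)
  rw [NNReal.coe_one, one_mul, dist_eq_norm, ← integral_sub (hint f) (hint f'),
    L1.dist_eq_integral_dist]
  simp_rw [dist_eq_norm]
  refine (norm_integral_le_integral_norm _).trans <| integral_mono_of_nonneg
    (ae_of_all _ fun _ ↦ norm_nonneg _)
    ((L1.integrable_coeFn f).sub (L1.integrable_coeFn f')).norm (ae_of_all _ fun x ↦ ?_)
  simp only [← smul_sub, norm_smul]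
  exact mul_le_of_le_one_left (norm_nonneg _) (hψ1 x)

theorem integral_smul_indicator_const [CompleteSpace X] (χ : α → ℝ) {s : Set α}
    (hs : MeasurableSet s) (c : X) :
    ∫ x, χ x • s.indicator (fun _ ↦ c) x ∂μ = (∫ x in s, χ x ∂μ) • c := by
  have : (fun x ↦ χ x • s.indicator (fun _ ↦ c) x) = s.indicator fun x ↦ χ x • c := by
    ext x; by_cases hx : x ∈ s <;> simp [hx]
  rw [this, integral_indicator hs, integral_smul_const]

theorem tendsto_integral_smul_of_tendsto_setIntegral [CompleteSpace X] {ψ : ℕ → α → ℝ}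
    {φ : α → ℝ} (hψ : ∀ n, AEStronglyMeasurable (ψ n) μ) (hψ1 : ∀ n x, ‖ψ n x‖ ≤ 1)
    (hφ : AEStronglyMeasurable φ μ) (hφ1 : ∀ x, ‖φ x‖ ≤ 1)
    (hlim : ∀ s, MeasurableSet s → μ s < ∞ →
      Tendsto (fun n ↦ ∫ x in s, ψ n x ∂μ) atTop (𝓝 (∫ x in s, φ x ∂μ)))
    {g : α → X} (hg : Integrable g μ) :
    Tendsto (fun n ↦ ∫ x, ψ n x • g x ∂μ) atTop (𝓝 (∫ x, φ x • g x ∂μ)) := by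
  have hadd : ∀ {χ : α → ℝ}, AEStronglyMeasurable χ μ → (∀ x, ‖χ x‖ ≤ 1) →
      ∀ {f f' : α → X}, Integrable f μ → Integrable f' μ →
        ∫ x, χ x • (f + f') x ∂μ = ∫ x, χ x • f x ∂μ + ∫ x, χ x • f' x ∂μ :=
    fun hχ hχ1 _ _ hf hf' ↦ by
      simp only [Pi.add_apply, smul_add]
      exact integral_add (hf.bdd_smul 1 hχ (ae_of_all _ hχ1)) (hf'.bdd_smul 1 hχ (ae_of_all _ hχ1))
  refine Integrable.induction
    (fun f ↦ Tendsto (fun n ↦ ∫ x, ψ n x • f x ∂μ) atTop (𝓝 (∫ x, φ x • f x ∂μ)))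
    (fun c s hs hμs ↦ ?_) (fun f f' _ hf hf' hlimf hlimf' ↦ ?_) ?_
    (fun f f' hff' _ hlimf ↦ ?_) hg
  · simp only [integral_smul_indicator_const _ hs]
    exact (hlim s hs hμs).smul_const c
  · rw [hadd hφ hφ1 hf hf']
    exact (hlimf.add hlimf').congr fun n ↦ (hadd (hψ n) (hψ1 n) hf hf').symm
  · exact (LipschitzWith.uniformEquicontinuous _ 1 fun n ↦
      lipschitzWith_integral_smul_L1 (hψ n) (hψ1 n)).equicontinuous.isClosed_setOfPred_tendsto
      (lipschitzWith_integral_smul_L1 hφ hφ1).continuous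
  · have hcongr : ∀ χ : α → ℝ, ∫ x, χ x • f x ∂μ = ∫ x, χ x • f' x ∂μ := fun χ ↦
      integral_congr_ae (hff'.mono fun x hx ↦ congrArg (χ x • ·) hx)
    simpa only [hcongr] using hlimf

theorem isClosed_setOf_integral_smul [IsFiniteMeasure μ] [IsSeparable μ] [CompleteSpace X]
    {g : α → X} (hg : Integrable g μ) :
    IsClosed {x : X | ∃ φ : α → ℝ, Measurable φ ∧ (∀ t, φ t ∈ Icc 0 1) ∧
      x = ∫ t, φ t • g t ∂μ} := by
  refine IsSeqClosed.isClosed fun u x hu hux ↦ ?_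
  choose ψ hψ hψ01 hu using hu
  obtain ⟨σ, hσ, φ, hφ, hφ01, hlim⟩ :=
    exists_subseq_tendsto_setIntegral_of_mem_Icc (μ := μ) hψ hψ01
  refine ⟨φ, hφ, hφ01, tendsto_nhds_unique (hux.comp hσ.tendsto_atTop) ?_⟩
  simp only [Function.comp_def, hu]
  exact tendsto_integral_smul_of_tendsto_setIntegral (fun n ↦ (hψ _).aestronglyMeasurable)
    (fun n x ↦ Real.norm_le_one_of_mem_Icc (hψ01 _ x)) hφ.aestronglyMeasurable
    (fun x ↦ Real.norm_le_one_of_mem_Icc (hφ01 x)) (fun s hs _ ↦ hlim s hs) hg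

theorem integral_smul_mem_closure_simpleFunc {g : α → X} (hg : Integrable g μ) {φ : α → ℝ}
    (hφ : Measurable φ) (hφ01 : ∀ t, φ t ∈ Icc 0 1) :
    ∫ t, φ t • g t ∂μ ∈ closure {x : X | ∃ s : SimpleFunc α ℝ, (∀ t, s t ∈ Icc 0 1) ∧
      x = ∫ t, s t • g t ∂μ} := by
  let s := SimpleFunc.approxOn φ hφ (Icc 0 1) 0 (left_mem_Icc.2 zero_le_one)
  have hs01 : ∀ n t, s n t ∈ Icc 0 1 := SimpleFunc.approxOn_mem hφ _
  refine mem_closure_of_tendsto (tendsto_integral_of_dominated_convergence (‖g ·‖)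
    (fun n ↦ (s n).measurable.aestronglyMeasurable.smul hg.aestronglyMeasurable) hg.norm
    (fun n ↦ ae_of_all _ fun t ↦ ?_) (ae_of_all _ fun t ↦ ?_))
    (Eventually.of_forall fun n ↦ ⟨s n, hs01 n, rfl⟩)
  · rw [Pi.smul_apply', norm_smul]
    exact mul_le_of_le_one_left (norm_nonneg _) (Real.norm_le_one_of_mem_Icc (hs01 n t))
  · exact (SimpleFunc.tendsto_approxOn hφ _ (subset_closure (hφ01 t))).smul_const _

end

/-- For a Bochner integrable `g : [0,1] → X`, the set
`{ ∫₀¹ φ(t) • g(t) dt : φ measurable, 0 ≤ φ ≤ 1 }` equals the norm closure of the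
corresponding set where `φ` ranges over simple (finitely-valued measurable) functions with
values in `[0,1]`. -/
theorem ISG_eq_closure_simple {X : Type*} [NormedAddCommGroup X] [NormedSpace ℝ X]
    [CompleteSpace X] (g : ℝ → X)
    (hg : Integrable g (volume.restrict (Set.Icc (0 : ℝ) 1))) :
    {x : X | ∃ φ : ℝ → ℝ, Measurable φ ∧ (∀ t, φ t ∈ Set.Icc (0 : ℝ) 1) ∧
        x = ∫ t in Set.Icc (0 : ℝ) 1, φ t • g t} =
      closure {x : X | ∃ s : SimpleFunc ℝ ℝ, (∀ t, s t ∈ Set.Icc (0 : ℝ) 1) ∧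
        x = ∫ t in Set.Icc (0 : ℝ) 1, s t • g t} := by
  refine Subset.antisymm ?_ (closure_minimal ?_ (isClosed_setOf_integral_smul hg))
  · rintro _ ⟨φ, hφ, hφ01, rfl⟩
    exact integral_smul_mem_closure_simpleFunc hg hφ hφ01
  · rintro _ ⟨s, hs01, rfl⟩
    exact ⟨s, s.measurable, hs01, rfl⟩
end

section
/- Let X be a real Banach space and let A, C be nonempty compact convex subsets of X. Then the Hausdorff distance between A and C equals the sup-norm distance of their support functions over the dual unit ball: d_H(A, C) = ⨆_{x* ∈ B_{X*}} | sSup(x* '' A) − sSup(x* '' C) |. (This is the isometry property of the Rådström support-function embedding i : ck(X) → ℓ∞(B_{X*}), i(A) = s(·, A): d_H(A,C) = ‖i(A) − i(C)‖_∞.) -/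
/-!
A functional `f` with `‖f‖ ≤ 1` is `1`-Lipschitz, so `f x ≤ s(f, C) + infDist x C`, and the
support functions of `A` and `C` at `f` differ by at most `d_H(A, C)`. Conversely, if `x ∈ A` has
distance `d > 0` from the convex set `C`, Hahn–Banach separates the open ball `B(x, d)` from `C`
by some `f`; normalised to norm one, it satisfies `s(f, C) + d ≤ f x ≤ s(f, A)`, so every point
of `A` lies within the supremum of the support-function gaps from `C`, and symmetrically.
-/

open Metric Set

section

variable {X : Type*} [NormedAddCommGroup X] [NormedSpace ℝ X]

namespace ContinuousLinearMap

theorem sSup_image_le_add_infDist (f : X →L[ℝ] ℝ) (hf : ‖f‖ ≤ 1) {C : Set X}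
    (hC : BddAbove (f '' C)) (hCne : C.Nonempty) (x : X) :
    f x ≤ sSup (f '' C) + infDist x C := by
  rw [← sub_le_iff_le_add']
  refine (le_infDist hCne).2 fun y hy => ?_
  have hy : f y ≤ sSup (f '' C) := le_csSup hC (mem_image_of_mem f hy)
  have hxy : f (x - y) ≤ dist x y := calc
    f (x - y) ≤ ‖f‖ * ‖x - y‖ := (le_abs_self _).trans (f.le_opNorm _)
    _ ≤ dist x y := by rw [dist_eq_norm]; exact mul_le_of_le_one_left (norm_nonneg _) hf
  rw [map_sub] at hxy
  linarith

theorem sSup_image_le_sSup_image_add_hausdorffDist (f : X →L[ℝ] ℝ) (hf : ‖f‖ ≤ 1)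
    {A C : Set X} (hA : Bornology.IsBounded A) (hAne : A.Nonempty) (hC : Bornology.IsBounded C)
    (hCne : C.Nonempty) : sSup (f '' A) ≤ sSup (f '' C) + hausdorffDist A C := by
  have hfin := hausdorffEDist_ne_top_of_nonempty_of_bounded hAne hCne hA hC
  refine csSup_le (hAne.image f) (forall_mem_image.2 fun x hx => ?_)
  calc f x ≤ sSup (f '' C) + infDist x C :=
        f.sSup_image_le_add_infDist hf (f.lipschitz.isBounded_image hC).bddAbove hCne x
    _ ≤ sSup (f '' C) + hausdorffDist A C := by
        gcongr
        exact infDist_le_hausdorffDist_of_mem hx hfin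

theorem abs_sSup_image_sub_sSup_image_le_hausdorffDist (f : X →L[ℝ] ℝ) (hf : ‖f‖ ≤ 1)
    {A C : Set X} (hA : Bornology.IsBounded A) (hAne : A.Nonempty) (hC : Bornology.IsBounded C)
    (hCne : C.Nonempty) : |sSup (f '' A) - sSup (f '' C)| ≤ hausdorffDist A C := by
  have hAC := f.sSup_image_le_sSup_image_add_hausdorffDist hf hA hAne hC hCne
  have hCA := f.sSup_image_le_sSup_image_add_hausdorffDist hf hC hCne hA hAne
  rw [hausdorffDist_comm] at hCA
  exact abs_sub_le_iff.2 ⟨by linarith, by linarith⟩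

theorem apply_add_mul_norm_le_of_forall_mem_ball_lt (f : X →L[ℝ] ℝ) {a : X} {r u : ℝ}
    (hr : 0 < r) (h : ∀ y ∈ ball a r, f y < u) : f a + r * ‖f‖ ≤ u := by
  suffices ‖f‖ ≤ (u - f a) / r by rw [le_div_iff₀ hr] at this; linarith
  rw [← f.sSup_unit_ball_eq_norm]
  refine csSup_le ((nonempty_ball.2 one_pos).image _) ?_
  rintro _ ⟨x, hx, rfl⟩
  have hrx : ‖r • x‖ < r := by
    rw [norm_smul, Real.norm_of_nonneg hr.le]
    exact mul_lt_of_lt_one_right hr (mem_ball_zero_iff.1 hx)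
  have hadd := h (a + r • x) (by rwa [mem_ball_iff_norm, add_sub_cancel_left])
  have hsub := h (a - r • x) (by rwa [mem_ball_iff_norm, sub_sub_cancel_left, norm_neg])
  simp only [map_add, map_sub, map_smul, smul_eq_mul] at hadd hsub
  show ‖f x‖ ≤ _
  rw [le_div_iff₀ hr, Real.norm_eq_abs, ← abs_of_pos hr, ← abs_mul, abs_le]
  constructor <;> linarith

end ContinuousLinearMap

theorem exists_norm_le_one_sSup_image_add_infDist_le {C : Set X} (hC : Convex ℝ C) (a : X) :
    ∃ f : X →L[ℝ] ℝ, ‖f‖ ≤ 1 ∧ sSup (f '' C) + infDist a C ≤ f a := by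
  -- `sSup ∅ = 0`, so `f = 0` also covers `C = ∅`.
  rcases (infDist_nonneg (x := a) (s := C)).eq_or_lt with hd | hd
  · refine ⟨0, by simp, ?_⟩
    rw [← hd, add_zero, zero_apply]
    exact Real.sSup_nonpos (by simp)
  obtain ⟨c, hc⟩ : C.Nonempty := nonempty_iff_ne_empty.2 fun h => by simp [h] at hd
  have hdisj : Disjoint (ball a (infDist a C)) C :=
    disjoint_left.2 fun y hy hyC => (mem_ball'.1 hy).not_ge (infDist_le_dist_of_mem hyC)
  obtain ⟨f, u, hball, hCu⟩ := geometric_hahn_banach_open (convex_ball a _) isOpen_ball hC hdisj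
  have hgap := f.apply_add_mul_norm_le_of_forall_mem_ball_lt hd hball
  have hfa := hball a (mem_ball_self hd)
  have hf : 0 < ‖f‖ := norm_pos_iff.2 fun hf0 => by
    have := hCu c hc
    simp only [hf0, zero_apply] at hfa this
    linarith
  refine ⟨-‖f‖⁻¹ • f, by simp [norm_smul, hf.ne'], ?_⟩
  suffices ∀ y ∈ C, -‖f‖⁻¹ * f y ≤ -‖f‖⁻¹ * f a - infDist a C by
    rw [← le_sub_iff_add_le]
    refine csSup_le ⟨_, mem_image_of_mem _ hc⟩ (forall_mem_image.2 fun y hy => ?_)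
    simpa using this y hy
  intro y hy
  have key : ‖f‖⁻¹ * (f a + infDist a C * ‖f‖) ≤ ‖f‖⁻¹ * f y :=
    mul_le_mul_of_nonneg_left (hgap.trans (hCu y hy)) (inv_nonneg.2 hf.le)
  rw [mul_add, mul_left_comm, inv_mul_cancel₀ hf.ne', mul_one] at key
  linarith

theorem exists_norm_le_one_infDist_le_sSup_image_sub_sSup_image {A C : Set X}
    (hA : Bornology.IsBounded A) {x : X} (hx : x ∈ A) (hC : Convex ℝ C) :
    ∃ f : X →L[ℝ] ℝ, ‖f‖ ≤ 1 ∧ infDist x C ≤ sSup (f '' A) - sSup (f '' C) := by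
  obtain ⟨f, hf, hsep⟩ := exists_norm_le_one_sSup_image_add_infDist_le hC x
  have hxA : f x ≤ sSup (f '' A) :=
    le_csSup (f.lipschitz.isBounded_image hA).bddAbove (mem_image_of_mem f hx)
  exact ⟨f, hf, by linarith⟩

end

theorem hausdorffDist_eq_iSup_abs_sub_sSup_general {X : Type*} [NormedAddCommGroup X]
    [NormedSpace ℝ X] (A C : Set X)
    (hA : IsCompact A) (hAne : A.Nonempty) (hAconv : Convex ℝ A)
    (hC : IsCompact C) (hCne : C.Nonempty) (hCconv : Convex ℝ C) :
    Metric.hausdorffDist A C =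
      ⨆ f : Metric.closedBall (0 : X →L[ℝ] ℝ) 1,
        |sSup ((f : X →L[ℝ] ℝ) '' A) - sSup ((f : X →L[ℝ] ℝ) '' C)| := by
  have hle (f : closedBall (0 : X →L[ℝ] ℝ) 1) :
      |sSup ((f : X →L[ℝ] ℝ) '' A) - sSup ((f : X →L[ℝ] ℝ) '' C)|
        ≤ hausdorffDist A C :=
    (f : X →L[ℝ] ℝ).abs_sSup_image_sub_sSup_image_le_hausdorffDist
      (mem_closedBall_zero_iff.1 f.2) hA.isBounded hAne hC.isBounded hCne
  have hbdd : BddAbove (range fun f : closedBall (0 : X →L[ℝ] ℝ) 1 =>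
      |sSup ((f : X →L[ℝ] ℝ) '' A) - sSup ((f : X →L[ℝ] ℝ) '' C)|) :=
    ⟨_, forall_mem_range.2 hle⟩
  refine le_antisymm (hausdorffDist_le_of_infDist (Real.iSup_nonneg fun _ => abs_nonneg _)
    (fun x hx => ?_) (fun x hx => ?_)) (ciSup_le hle)
  · obtain ⟨f, hf, hxf⟩ :=
      exists_norm_le_one_infDist_le_sSup_image_sub_sSup_image hA.isBounded hx hCconv
    exact hxf.trans ((le_abs_self _).trans (le_ciSup hbdd ⟨f, mem_closedBall_zero_iff.2 hf⟩))
  · obtain ⟨f, hf, hxf⟩ :=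
      exists_norm_le_one_infDist_le_sSup_image_sub_sSup_image hC.isBounded hx hAconv
    exact hxf.trans ((le_abs_self _).trans ((abs_sub_comm _ _).trans_le
      (le_ciSup hbdd ⟨f, mem_closedBall_zero_iff.2 hf⟩)))

/-- For nonempty compact convex subsets `A, C` of a real Banach space, the Hausdorff distance
between `A` and `C` equals the sup over the dual unit ball of the absolute difference of the
support functions (isometry of the Rådström embedding). -/
theorem hausdorffDist_eq_iSup_abs_sub_sSup {X : Type*} [NormedAddCommGroup X]
    [NormedSpace ℝ X] [CompleteSpace X] (A C : Set X)
    (hA : IsCompact A) (hAne : A.Nonempty) (hAconv : Convex ℝ A)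
    (hC : IsCompact C) (hCne : C.Nonempty) (hCconv : Convex ℝ C) :
    Metric.hausdorffDist A C =
      ⨆ f : Metric.closedBall (0 : X →L[ℝ] ℝ) 1,
        |sSup ((f : X →L[ℝ] ℝ) '' A) - sSup ((f : X →L[ℝ] ℝ) '' C)| :=
  hausdorffDist_eq_iSup_abs_sub_sSup_general A C hA hAne hAconv hC hCne hCconv
end
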